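/- The 4-D isotropic harmonic oscillator Hamiltonian H_ω = (1/2)Σᵢ(pᵢ² + ω qᵢ²) expressed in Projective Euler variables equals (ρω)/2 + 2ρP² + (2/ρ)(Θ² + (Φ² + Ψ² - 2ΦΨ cos θ)/sin² θ) on the domain where sin θ ≠ 0 (i.e., away from the invariant manifolds q₁ = q₄ = 0 and q₂ = q₃ = 0). -/
import Mathlib


/-- Projective Euler coordinate functions on T*ℍ₀. -/
noncomputable def q1f (ρ φ θ ψ : ℝ) : ℝ :=
  Real.sqrt ρ * Real.cos (θ / 2) * Real.sin ((φ + ψ) / 2)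
noncomputable def q2f (ρ φ θ ψ : ℝ) : ℝ :=
  Real.sqrt ρ * Real.sin (θ / 2) * Real.cos ((φ - ψ) / 2)
noncomputable def q3f (ρ φ θ ψ : ℝ) : ℝ :=
  Real.sqrt ρ * Real.sin (θ / 2) * Real.sin ((φ - ψ) / 2)
noncomputable def q4f (ρ φ θ ψ : ℝ) : ℝ :=
  Real.sqrt ρ * Real.cos (θ / 2) * Real.cos ((φ + ψ) / 2)

private lemma hd_q_r (c d x : ℝ) (hx : x ≠ 0) :
    deriv (fun t => Real.sqrt t * c * d) x = c * d / (2 * Real.sqrt x) := by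
  have h := ((Real.hasDerivAt_sqrt hx).mul_const c).mul_const d
  rw [h.deriv]; ring

private lemma half_add_r (a x : ℝ) : HasDerivAt (fun t : ℝ => (t + a) / 2) (1/2) x := by
  simpa using ((hasDerivAt_id x).add_const a).div_const 2

private lemma half_add_l (a x : ℝ) : HasDerivAt (fun t : ℝ => (a + t) / 2) (1/2) x := by
  simpa using ((hasDerivAt_id x).const_add a).div_const 2

private lemma half_sub_r (a x : ℝ) : HasDerivAt (fun t : ℝ => (t - a) / 2) (1/2) x := by
  simpa using ((hasDerivAt_id x).sub_const a).div_const 2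

private lemma half_sub_l (a x : ℝ) : HasDerivAt (fun t : ℝ => (a - t) / 2) (-1/2) x := by
  simpa using ((hasDerivAt_id x).const_sub a).div_const 2

private lemma hd_sin_ar (k a x : ℝ) :
    deriv (fun t => k * Real.sin ((t + a)/2)) x = k * Real.cos ((x + a)/2) / 2 := by
  have h := (half_add_r a x).sin.const_mul k
  rw [h.deriv]; ring

private lemma hd_cos_ar (k a x : ℝ) :
    deriv (fun t => k * Real.cos ((t + a)/2)) x = -(k * Real.sin ((x + a)/2)) / 2 := by
  have h := (half_add_r a x).cos.const_mul k
  rw [h.deriv]; ring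

private lemma hd_sin_sr (k a x : ℝ) :
    deriv (fun t => k * Real.sin ((t - a)/2)) x = k * Real.cos ((x - a)/2) / 2 := by
  have h := (half_sub_r a x).sin.const_mul k
  rw [h.deriv]; ring

private lemma hd_cos_sr (k a x : ℝ) :
    deriv (fun t => k * Real.cos ((t - a)/2)) x = -(k * Real.sin ((x - a)/2)) / 2 := by
  have h := (half_sub_r a x).cos.const_mul k
  rw [h.deriv]; ring

private lemma hd_sin_al (k a x : ℝ) :
    deriv (fun t => k * Real.sin ((a + t)/2)) x = k * Real.cos ((a + x)/2) / 2 := by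
  have h := (half_add_l a x).sin.const_mul k
  rw [h.deriv]; ring

private lemma hd_cos_al (k a x : ℝ) :
    deriv (fun t => k * Real.cos ((a + t)/2)) x = -(k * Real.sin ((a + x)/2)) / 2 := by
  have h := (half_add_l a x).cos.const_mul k
  rw [h.deriv]; ring

private lemma hd_sin_sl (k a x : ℝ) :
    deriv (fun t => k * Real.sin ((a - t)/2)) x = -(k * Real.cos ((a - x)/2)) / 2 := by
  have h := (half_sub_l a x).sin.const_mul k
  rw [h.deriv]; ring

private lemma hd_cos_sl (k a x : ℝ) :
    deriv (fun t => k * Real.cos ((a - t)/2)) x = k * Real.sin ((a - x)/2) / 2 := by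
  have h := (half_sub_l a x).cos.const_mul k
  rw [h.deriv]; ring

private lemma hd_cos_half (k m x : ℝ) :
    deriv (fun t => k * Real.cos (t/2) * m) x = -(k * Real.sin (x/2) * m) / 2 := by
  have h1 : HasDerivAt (fun t : ℝ => t / 2) (1/2) x := by
    simpa using (hasDerivAt_id x).div_const 2
  have h := (h1.cos.const_mul k).mul_const m
  rw [h.deriv]; ring

private lemma hd_sin_half (k m x : ℝ) :
    deriv (fun t => k * Real.sin (t/2) * m) x = k * Real.cos (x/2) * m / 2 := by
  have h1 : HasDerivAt (fun t : ℝ => t / 2) (1/2) x := by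
    simpa using (hasDerivAt_id x).div_const 2
  have h := (h1.sin.const_mul k).mul_const m
  rw [h.deriv]; ring

/-- The 4-D isotropic harmonic oscillator
H_ω = (1/2)Σᵢ(pᵢ² + ω qᵢ²), expressed in Projective Euler variables (with
the momenta related canonically via Σpᵢ dqᵢ = P dρ + Φ dφ + Θ dθ + Ψ dψ),
equals ρω/2 + 2ρP² + (2/ρ)(Θ² + (Φ² + Ψ² - 2ΦΨ cos θ)/sin²θ) away from the
invariant manifolds (i.e. where sin θ ≠ 0). -/
theorem oscillator_projective_euler (ω ρ φ θ ψ P Φ Θ Ψ p1 p2 p3 p4 : ℝ)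
    (hρ : 0 < ρ) (hθ : Real.sin θ ≠ 0)
    (hP : p1 * deriv (fun t => q1f t φ θ ψ) ρ + p2 * deriv (fun t => q2f t φ θ ψ) ρ
        + p3 * deriv (fun t => q3f t φ θ ψ) ρ + p4 * deriv (fun t => q4f t φ θ ψ) ρ = P)
    (hΦ : p1 * deriv (fun t => q1f ρ t θ ψ) φ + p2 * deriv (fun t => q2f ρ t θ ψ) φ
        + p3 * deriv (fun t => q3f ρ t θ ψ) φ + p4 * deriv (fun t => q4f ρ t θ ψ) φ = Φ)
    (hΘ : p1 * deriv (fun t => q1f ρ φ t ψ) θ + p2 * deriv (fun t => q2f ρ φ t ψ) θ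
        + p3 * deriv (fun t => q3f ρ φ t ψ) θ + p4 * deriv (fun t => q4f ρ φ t ψ) θ = Θ)
    (hΨ : p1 * deriv (fun t => q1f ρ φ θ t) ψ + p2 * deriv (fun t => q2f ρ φ θ t) ψ
        + p3 * deriv (fun t => q3f ρ φ θ t) ψ + p4 * deriv (fun t => q4f ρ φ θ t) ψ = Ψ) :
    (1 / 2) * ((p1 ^ 2 + p2 ^ 2 + p3 ^ 2 + p4 ^ 2)
        + ω * (q1f ρ φ θ ψ ^ 2 + q2f ρ φ θ ψ ^ 2 + q3f ρ φ θ ψ ^ 2 + q4f ρ φ θ ψ ^ 2))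
      = ρ * ω / 2 + 2 * ρ * P ^ 2
        + (2 / ρ) * (Θ ^ 2
            + (Φ ^ 2 + Ψ ^ 2 - 2 * Φ * Ψ * Real.cos θ) / (Real.sin θ) ^ 2) := by
  simp only [q1f, q2f, q3f, q4f] at hP hΦ hΘ hΨ ⊢
  rw [hd_q_r _ _ _ hρ.ne', hd_q_r _ _ _ hρ.ne', hd_q_r _ _ _ hρ.ne',
      hd_q_r _ _ _ hρ.ne'] at hP
  rw [hd_sin_ar, hd_cos_sr, hd_sin_sr, hd_cos_ar] at hΦ
  rw [hd_cos_half, hd_sin_half, hd_sin_half, hd_cos_half] at hΘ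
  rw [hd_sin_al, hd_cos_sl, hd_sin_sl, hd_cos_al] at hΨ
  have hsin : Real.sin θ = 2 * Real.sin (θ/2) * Real.cos (θ/2) := by
    rw [← Real.sin_two_mul]; congr 1; ring
  have hcos : Real.cos θ = Real.cos (θ/2)^2 - Real.sin (θ/2)^2 := by
    have h1 := Real.cos_two_mul (θ/2)
    have h2 := Real.sin_sq_add_cos_sq (θ/2)
    rw [show 2*(θ/2) = θ by ring] at h1
    linarith
  rw [hsin] at hθ
  rw [hsin, hcos]
  set s := Real.sqrt ρ with hsdef
  set sA := Real.sin (θ/2) with hsA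
  set cA := Real.cos (θ/2) with hcA
  set sU := Real.sin ((φ + ψ)/2) with hsU
  set cU := Real.cos ((φ + ψ)/2) with hcU
  set sV := Real.sin ((φ - ψ)/2) with hsV
  set cV := Real.cos ((φ - ψ)/2) with hcV
  have hs2 : s^2 = ρ := Real.sq_sqrt hρ.le
  have hs0 : s ≠ 0 := (Real.sqrt_pos.mpr hρ).ne'
  have hA : sA^2 + cA^2 = 1 := Real.sin_sq_add_cos_sq _
  have hU : sU^2 + cU^2 = 1 := Real.sin_sq_add_cos_sq _
  have hV : sV^2 + cV^2 = 1 := Real.sin_sq_add_cos_sq _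
  have hq : (s * cA * sU) ^ 2 + (s * sA * cV) ^ 2 + (s * sA * sV) ^ 2 + (s * cA * cU) ^ 2 = ρ := by
    linear_combination (s^2*cA^2) * hU + (s^2*sA^2) * hV + s^2 * hA + hs2
  rw [hq]
  have hP' : P = (p1*cA*sU + p2*sA*cV + p3*sA*sV + p4*cA*cU) / (2*s) := by
    rw [← hP]; ring
  have hΦ' : Φ = s/2 * (p1*cA*cU - p2*sA*sV + p3*sA*cV - p4*cA*sU) := by
    rw [← hΦ]; ring
  have hΘ' : Θ = s/2 * (-(p1*sA*sU) + p2*cA*cV + p3*cA*sV - p4*sA*cU) := by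
    rw [← hΘ]; ring
  have hΨ' : Ψ = s/2 * (p1*cA*cU + p2*sA*sV - p3*sA*cV - p4*cA*sU) := by
    rw [← hΨ]; ring
  have eP : 2 * ρ * P ^ 2 = (p1*cA*sU + p2*sA*cV + p3*sA*sV + p4*cA*cU)^2 / 2 := by
    rw [hP', ← hs2]; field_simp
  have eΘ : Θ ^ 2 = ρ/4 * (-(p1*sA*sU) + p2*cA*cV + p3*cA*sV - p4*sA*cU)^2 := by
    rw [hΘ', ← hs2]; ring
  have eM : Φ ^ 2 + Ψ ^ 2 - 2 * Φ * Ψ * (cA ^ 2 - sA ^ 2)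
      = (2*sA*cA)^2 * (ρ/4 * ((p1*cU - p4*sU)^2 + (p3*cV - p2*sV)^2)) := by
    rw [hΦ', hΨ', ← hs2]
    linear_combination (-(s^2/2)*(cA^2*(p1*cU - p4*sU)^2 + sA^2*(p3*cV - p2*sV)^2)) * hA
  rw [eP, eΘ, eM, mul_div_cancel_left₀ _ (pow_ne_zero 2 hθ)]
  have eZ : (2/ρ) * (ρ/4 * (-(p1*sA*sU) + p2*cA*cV + p3*cA*sV - p4*sA*cU)^2
      + ρ/4 * ((p1*cU - p4*sU)^2 + (p3*cV - p2*sV)^2))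
      = ((-(p1*sA*sU) + p2*cA*cV + p3*cA*sV - p4*sA*cU)^2
        + ((p1*cU - p4*sU)^2 + (p3*cV - p2*sV)^2)) / 2 := by
    field_simp; ring
  rw [eZ]
  linear_combination (-(1/2)*((p1*sU + p4*cU)^2 + (p2*cV + p3*sV)^2)) * hA
    + (-(1/2)*(p1^2 + p4^2)) * hU + (-(1/2)*(p2^2 + p3^2)) * hV
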